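/- arXiv:2109.08943 — 2 statements merged into one kernel-verified Lean document; each statement's English description precedes it below -/
import Mathlib

section
/- Let N be a structure with a (κ,Δ)-decomposition N = A ⊔ ⨆_{i∈I} B_i (a κ-partition that is a Δ-congruence over A), with κ infinite and |Δ| ≤ κ. Then for every subset J ⊆ I, letting B_J = ⋃_{j∈J} B_j, the number of Δ-types over A ∪ B_J realized by finite tuples from N − (A ∪ B_J) is at most 2^κ. -/
/-!
Let `B_J = ⋃_{j ∈ J} B_j`. Two tuples `c̄, d̄` outside `A ∪ B_J` with the same equality pattern,
the same pattern of shared parts and the same Δ-type over `A` have the same Δ-type over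
`A ∪ B_J`: for parameters `b̄` from `B_J \ A`, the (deduplicated) tuples `c̄ b̄` and `d̄ b̄` are
`∼_Δ`-equivalent, since every piece lies either among the `c̄`, `d̄` or among the `b̄`, so the
congruence gives them equal Δ-types over `A`. For tuples of a fixed length there are only
finitely many patterns and at most `2 ^ κ` Δ-types over `A`, hence at most `2 ^ κ` Δ-types over
`A ∪ B_J`.
-/

open FirstOrder Cardinal

variable {L : FirstOrder.Language.{0,0}} {N : Type} [L.Structure N]

/-- The Δ-type of a tuple `c` (indexed by `ι`) over the parameter set `A`: the set of triples
`(n, φ, v)` where `φ ∈ Δ` has free variables `Fin n`, each variable is assigned either a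
coordinate of `c` or a parameter in `A`, and `φ` is satisfied under that assignment. -/
def DType (Δ : Set (Σ n, L.Formula (Fin n))) (A : Set N) {ι : Type} (c : ι → N) :
    Set (Σ n, L.Formula (Fin n) × (Fin n → ι ⊕ A)) :=
  { p | (⟨p.1, p.2.1⟩ : Σ n, L.Formula (Fin n)) ∈ Δ ∧
      p.2.1.Realize (fun i => Sum.elim c (fun b => (b : N)) (p.2.2 i)) }

/-- `c ∼_Δ d`: both tuples are injective (no repeated elements) and can be written as
concatenations of pieces, each piece lying inside a single part `B i` (with pairwise distinct
parts), such that corresponding pieces have the same Δ-type over `A`. -/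
def SimD (Δ : Set (Σ n, L.Formula (Fin n))) (A : Set N) {I : Type} (B : I → Set N)
    {k : ℕ} (c d : Fin k → N) : Prop :=
  Function.Injective c ∧ Function.Injective d ∧
  ∃ (m : ℕ) (P : Fin k → Fin m) (fc fd : Fin m → I),
    Function.Injective fc ∧ Function.Injective fd ∧
    (∀ j, c j ∈ B (fc (P j))) ∧ (∀ j, d j ∈ B (fd (P j))) ∧
    ∀ ℓ : Fin m, DType Δ A (fun j : {j // P j = ℓ} => c j) =
      DType Δ A (fun j : {j // P j = ℓ} => d j)

/-- The partition `N = A ⊔ ⨆ᵢ B i` is a Δ-congruence over `A`. -/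
def IsCongruence (Δ : Set (Σ n, L.Formula (Fin n))) (A : Set N) {I : Type} (B : I → Set N) :
    Prop :=
  ∀ (k : ℕ) (c d : Fin k → N), (∀ j, c j ∉ A) → (∀ j, d j ∉ A) →
    SimD Δ A B c d → DType Δ A c = DType Δ A d

/-- The Δ-types over `A` realized by finite tuples from `N - A`. -/
def RealizedTypes (Δ : Set (Σ n, L.Formula (Fin n))) (A : Set N) :
    Set (Σ k : ℕ, Set (Σ n, L.Formula (Fin n) × (Fin n → Fin k ⊕ A))) :=
  { q | ∃ c : Fin q.1 → N, (∀ j, c j ∉ A) ∧ q.2 = DType Δ A c }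

/-- The Δ-types over `A` realized by single elements of `N - A`. -/
def Realized1Types (Δ : Set (Σ n, L.Formula (Fin n))) (A : Set N) :
    Set (Set (Σ n, L.Formula (Fin n) × (Fin n → Fin 1 ⊕ A))) :=
  { s | ∃ a : N, a ∉ A ∧ s = DType Δ A (fun _ : Fin 1 => a) }

/-- The set of quantifier-free formulas of `L`. -/
def QFset (L : FirstOrder.Language.{0,0}) : Set (Σ n, L.Formula (Fin n)) :=
  { p | FirstOrder.Language.BoundedFormula.IsQF p.2 }

lemma mk_range_le_of_factorsThrough {α : Type*} {β γ : Type u} {f : α → β} {g : α → γ}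
    (h : Function.FactorsThrough f g) : #(Set.range f) ≤ #(Set.range g) := by
  refine mk_le_of_surjective (f := fun y : Set.range g => ⟨f y.2.choose, Set.mem_range_self _⟩) ?_
  rintro ⟨_, a, rfl⟩
  exact ⟨⟨g a, a, rfl⟩, Subtype.ext (h (Set.mem_range.mp ⟨a, rfl⟩).choose_spec)⟩

-- In `DType` the coercion `A → N` is elaborated through the `Sum` monad; this is the usable form.
lemma mem_DType_iff (Δ : Set (Σ n, L.Formula (Fin n))) (A : Set N) {ι : Type} (c : ι → N)
    (p : Σ n, L.Formula (Fin n) × (Fin n → ι ⊕ A)) :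
    p ∈ DType Δ A c ↔ (⟨p.1, p.2.1⟩ : Σ n, L.Formula (Fin n)) ∈ Δ ∧
      p.2.1.Realize (fun i => Sum.elim c Subtype.val (p.2.2 i)) := by
  refine and_congr Iff.rfl (iff_of_eq (congrArg _ (funext fun i => ?_)))
  cases p.2.2 i <;> rfl

lemma mem_DType_iff_of_eval (Δ : Set (Σ n, L.Formula (Fin n))) {A A' : Set N} {ι ι' : Type}
    {c : ι → N} {c' : ι' → N} {n : ℕ} {φ : L.Formula (Fin n)} {v : Fin n → ι ⊕ A}
    {v' : Fin n → ι' ⊕ A'}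
    (h : ∀ i, Sum.elim c Subtype.val (v i) = Sum.elim c' Subtype.val (v' i)) :
    (⟨n, φ, v⟩ : Σ n, L.Formula (Fin n) × (Fin n → ι ⊕ A)) ∈ DType Δ A c ↔
      (⟨n, φ, v'⟩ : Σ n, L.Formula (Fin n) × (Fin n → ι' ⊕ A')) ∈ DType Δ A' c' := by
  rw [mem_DType_iff, mem_DType_iff, funext h]

lemma DType_comp_congr (Δ : Set (Σ n, L.Formula (Fin n))) (A : Set N) {ι ι' : Type}
    (g : ι' → ι) {c d : ι → N} (h : DType Δ A c = DType Δ A d) :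
    DType Δ A (c ∘ g) = DType Δ A (d ∘ g) := by
  have hmap : ∀ (e : ι → N) (y : ι' ⊕ A),
      Sum.elim (e ∘ g) Subtype.val y = Sum.elim e Subtype.val (Sum.map g id y) := by
    intro e y; cases y <;> rfl
  ext ⟨n, φ, v⟩
  rw [mem_DType_iff_of_eval Δ (fun i => hmap c (v i)), h,
    ← mem_DType_iff_of_eval Δ (fun i => hmap d (v i))]

lemma DType_subset_of_forall_finset {Δ : Set (Σ n, L.Formula (Fin n))} {A A' : Set N}
    {ι : Type} {c d : ι → N} (hcA : ∀ j, c j ∉ A) (σ : N → N) (hσc : ∀ j, σ (c j) = d j)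
    (hσ : ∀ x ∈ A' \ A, σ x = x)
    (h : ∀ Y : Finset N, (Y : Set N) ⊆ Set.range c ∪ (A' \ A) →
      DType Δ A (fun y : Y => (y : N)) = DType Δ A (fun y : Y => σ y)) :
    DType Δ A' c ⊆ DType Δ A' d := by
  classical
  rintro ⟨n, φ, v⟩ hp
  let w : Fin n → N := fun i => Sum.elim c Subtype.val (v i)
  -- the parameters outside `A` join the tuple; those in `A` stay parameters
  let Y : Finset N := (Finset.univ.image w).filter (· ∉ A)
  have hY : (Y : Set N) ⊆ Set.range c ∪ (A' \ A) := by
    intro x hx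
    simp only [Y, Finset.coe_filter, Finset.mem_image, Finset.mem_univ, true_and,
      Set.mem_ofPred_eq] at hx
    obtain ⟨⟨i, rfl⟩, hxA⟩ := hx
    rcases hv : v i with j | a
    · exact Or.inl ⟨j, by simp [w, hv]⟩
    · exact Or.inr ⟨by simp [w, hv], by simpa [w, hv] using hxA⟩
  let v' : Fin n → Y ⊕ A := fun i =>
    if hi : w i ∈ A then .inr ⟨w i, hi⟩ else .inl ⟨w i, by simp [Y, hi]⟩
  have hcv : ∀ i,
      Sum.elim c Subtype.val (v i) = Sum.elim (fun y : Y => (y : N)) Subtype.val (v' i) := by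
    intro i
    by_cases hi : w i ∈ A <;> simp [v', hi, w]
  have hdv : ∀ i,
      Sum.elim d Subtype.val (v i) = Sum.elim (fun y : Y => σ y) Subtype.val (v' i) := by
    intro i
    rcases hv : v i with j | a
    · simp [v', w, hv, hcA j, hσc]
    · by_cases ha : (a : N) ∈ A
      · simp [v', w, hv, ha]
      · simp [v', w, hv, ha, hσ a ⟨a.2, ha⟩]
  rw [mem_DType_iff_of_eval Δ hdv, ← h Y hY, ← mem_DType_iff_of_eval Δ hcv]
  exact hp

lemma mk_setOf_formula_mem_le {κ : Cardinal.{0}} (hκ : ℵ₀ ≤ κ)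
    {Δ : Set (Σ n, L.Formula (Fin n))} (hΔ : #Δ ≤ κ) {X : Type} (hX : #X ≤ κ) :
    #{p : Σ n, L.Formula (Fin n) × (Fin n → X) | (⟨p.1, p.2.1⟩ : Σ n, L.Formula (Fin n)) ∈ Δ}
      ≤ κ := by
  let toSet : (Σ δ : Δ, Fin δ.1.1 → X) →
      {p : Σ n, L.Formula (Fin n) × (Fin n → X) | (⟨p.1, p.2.1⟩ : Σ n, L.Formula (Fin n)) ∈ Δ} :=
    fun q => ⟨⟨q.1.1.1, q.1.1.2, q.2⟩, q.1.2⟩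
  have hsurj : Function.Surjective toSet := fun ⟨⟨n, φ, v⟩, h⟩ => ⟨⟨⟨⟨n, φ⟩, h⟩, v⟩, rfl⟩
  calc _ ≤ #(Σ δ : Δ, Fin δ.1.1 → X) := mk_le_of_surjective hsurj
    _ = sum fun δ : Δ => #X ^ δ.1.1 := by simp [mk_sigma]
    _ ≤ sum fun _ : Δ => κ :=
        sum_le_sum _ _ fun δ => (power_le_power_right hX).trans (power_nat_le hκ)
    _ = #Δ * κ := sum_const' _ _
    _ ≤ κ := mul_le_of_le hκ hΔ le_rfl

lemma mk_range_DType_le {κ : Cardinal.{0}} (hκ : ℵ₀ ≤ κ)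
    {Δ : Set (Σ n, L.Formula (Fin n))} (hΔ : #Δ ≤ κ) {A : Set N} (hA : #A ≤ κ)
    (ι : Type) [Finite ι] :
    #(Set.range (DType Δ A : (ι → N) → _)) ≤ 2 ^ κ := by
  have hsub : Set.range (DType Δ A : (ι → N) → _) ⊆
      𝒫 {p | (⟨p.1, p.2.1⟩ : Σ n, L.Formula (Fin n)) ∈ Δ} := by
    rintro _ ⟨c, rfl⟩ p hp
    exact hp.1
  have hιA : #(ι ⊕ A) ≤ κ := by
    rw [mk_sum, lift_id, lift_id]
    exact add_le_of_le hκ ((lt_aleph0_of_finite ι).le.trans hκ) hA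
  calc _ ≤ #(𝒫 {p : Σ n, L.Formula (Fin n) × (Fin n → ι ⊕ A) |
          (⟨p.1, p.2.1⟩ : Σ n, L.Formula (Fin n)) ∈ Δ}) := mk_le_mk_of_subset hsub
    _ ≤ 2 ^ κ := by
        rw [mk_powerset]
        exact power_le_power_left two_ne_zero (mk_setOf_formula_mem_le hκ hΔ hιA)

def SamePart {I : Type} (B : I → Set N) (x y : N) : Prop :=
  ∃ i, x ∈ B i ∧ y ∈ B i

section Partition

variable {I : Type} {B : I → Set N}

lemma eq_of_mem_of_mem (hdisj : ∀ i j, i ≠ j → Disjoint (B i) (B j)) {x : N} {i i' : I}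
    (hx : x ∈ B i) (hx' : x ∈ B i') : i = i' := by
  by_contra hne
  exact Set.disjoint_left.mp (hdisj i i' hne) hx hx'

lemma samePart_iff_eq (hdisj : ∀ i j, i ≠ j → Disjoint (B i) (B j)) {x y : N} {i i' : I}
    (hx : x ∈ B i) (hy : y ∈ B i') : SamePart B x y ↔ i = i' := by
  constructor
  · rintro ⟨i₀, hx₀, hy₀⟩
    rw [eq_of_mem_of_mem hdisj hx hx₀, eq_of_mem_of_mem hdisj hy hy₀]
  · rintro rfl
    exact ⟨i, hx, hy⟩

lemma SamePart.mem_biUnion_iff (hdisj : ∀ i j, i ≠ j → Disjoint (B i) (B j)) {x y : N}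
    (h : SamePart B x y) (J : Set I) : x ∈ ⋃ j ∈ J, B j ↔ y ∈ ⋃ j ∈ J, B j := by
  obtain ⟨i, hx, hy⟩ := h
  simp only [Set.mem_iUnion₂, exists_prop]
  constructor
  · rintro ⟨j, hj, hxj⟩
    exact ⟨i, eq_of_mem_of_mem hdisj hxj hx ▸ hj, hy⟩
  · rintro ⟨j, hj, hyj⟩
    exact ⟨i, eq_of_mem_of_mem hdisj hyj hy ▸ hj, hx⟩

lemma exists_mem_of_not_mem {A : Set N} (hcover : A ∪ ⋃ i, B i = Set.univ) {x : N}
    (hx : x ∉ A) : ∃ i, x ∈ B i := by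
  have hx' : x ∈ A ∪ ⋃ i, B i := hcover ▸ Set.mem_univ x
  exact Set.mem_iUnion.mp (hx'.resolve_left hx)

lemma simD_of_samePart {Δ : Set (Σ n, L.Formula (Fin n))} {A : Set N}
    (hdisj : ∀ i j, i ≠ j → Disjoint (B i) (B j)) {k : ℕ} {c d : Fin k → N}
    (hc : Function.Injective c) (hd : Function.Injective d)
    (hcB : ∀ j, ∃ i, c j ∈ B i) (hdB : ∀ j, ∃ i, d j ∈ B i)
    (hpat : ∀ j j', SamePart B (c j) (c j') ↔ SamePart B (d j) (d j'))
    (hblock : ∀ (β : Type) (g : β → Fin k), (∀ x y, SamePart B (c (g x)) (c (g y))) →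
      DType Δ A (c ∘ g) = DType Δ A (d ∘ g)) :
    SimD Δ A B c d := by
  classical
  choose pc hpc using hcB
  choose pd hpd using hdB
  have hpat' : ∀ j j', pc j = pc j' ↔ pd j = pd j' := fun j j' => by
    rw [← samePart_iff_eq hdisj (hpc j) (hpc j'), ← samePart_iff_eq hdisj (hpd j) (hpd j')]
    exact hpat j j'
  -- the pieces are the nonempty fibres of `pc`, numbered through an enumeration of its image
  let S : Finset I := Finset.univ.image pc
  let P : Fin k → Fin S.card := fun j => S.equivFin ⟨pc j, Finset.mem_image_of_mem _ (by simp)⟩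
  let fc : Fin S.card → I := fun ℓ => S.equivFin.symm ℓ
  have hfcP : ∀ j, fc (P j) = pc j := by simp [fc, P]
  have hP : ∀ j j', pc j = pc j' → P j = P j' := by intro j j' h; simp [P, h]
  have hPsurj : ∀ ℓ, ∃ j, P j = ℓ := by
    intro ℓ
    obtain ⟨j, -, hj⟩ := Finset.mem_image.mp (S.equivFin.symm ℓ).2
    exact ⟨j, by simp [P, hj]⟩
  choose rep hrep using hPsurj
  let fd : Fin S.card → I := fun ℓ => pd (rep ℓ)
  have hfdP : ∀ j, fd (P j) = pd j := by
    intro j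
    refine (hpat' _ _).mp ?_
    rw [← hfcP, hrep, hfcP]
  refine ⟨hc, hd, S.card, P, fc, fd, Subtype.val_injective.comp S.equivFin.symm.injective,
    fun ℓ ℓ' h => ?_, fun j => hfcP j ▸ hpc j, fun j => hfdP j ▸ hpd j, fun ℓ => ?_⟩
  · rw [← hrep ℓ, ← hrep ℓ']
    exact hP _ _ ((hpat' _ _).mpr h)
  · have hmem : ∀ x : {j // P j = ℓ}, c x ∈ B (fc ℓ) := by
      rintro ⟨j, rfl⟩
      exact hfcP j ▸ hpc j
    exact hblock _ Subtype.val fun x y => ⟨fc ℓ, hmem x, hmem y⟩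

lemma IsCongruence.DType_eq {Δ : Set (Σ n, L.Formula (Fin n))} {A : Set N}
    (hcong : IsCongruence Δ A B) (hdisj : ∀ i j, i ≠ j → Disjoint (B i) (B j))
    (hcover : A ∪ ⋃ i, B i = Set.univ) {ι : Type} [Finite ι] {c d : ι → N}
    (hc : Function.Injective c) (hd : Function.Injective d)
    (hcA : ∀ j, c j ∉ A) (hdA : ∀ j, d j ∉ A)
    (hpat : ∀ j j', SamePart B (c j) (c j') ↔ SamePart B (d j) (d j'))
    (hblock : ∀ (β : Type) (g : β → ι), (∀ x y, SamePart B (c (g x)) (c (g y))) →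
      DType Δ A (c ∘ g) = DType Δ A (d ∘ g)) :
    DType Δ A c = DType Δ A d := by
  obtain ⟨k, ⟨e⟩⟩ := Finite.exists_equiv_fin ι
  have h := hcong k (c ∘ e.symm) (d ∘ e.symm) (fun j => hcA _) (fun j => hdA _)
    (simD_of_samePart hdisj (hc.comp e.symm.injective) (hd.comp e.symm.injective)
      (fun j => exists_mem_of_not_mem hcover (hcA _))
      (fun j => exists_mem_of_not_mem hcover (hdA _))
      (fun j j' => hpat _ _) (fun β g hg => hblock β (e.symm ∘ g) hg))
  simpa [Function.comp_def] using DType_comp_congr Δ A e h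

end Partition

section Transfer

variable {I : Type} {B : I → Set N} {J : Set I} {ι : Type} {c d : ι → N} {σ : N → N}

lemma injOn_of_map (hd : ∀ j, d j ∉ ⋃ i ∈ J, B i) (heq : ∀ j j', c j = c j' ↔ d j = d j')
    (hσc : ∀ j, σ (c j) = d j) (hσJ : ∀ x ∈ ⋃ i ∈ J, B i, σ x = x) :
    Set.InjOn σ (Set.range c ∪ ⋃ i ∈ J, B i) := by
  rintro x hx y hy h
  rcases hx with ⟨j, rfl⟩ | hx <;> rcases hy with ⟨j', rfl⟩ | hy
  · rw [hσc, hσc] at h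
    exact (heq j j').mpr h
  · rw [hσc, hσJ y hy] at h
    exact absurd (h ▸ hy) (hd j)
  · rw [hσc, hσJ x hx] at h
    exact absurd (h ▸ hx) (hd j')
  · rwa [hσJ x hx, hσJ y hy] at h

lemma samePart_map_iff (hdisj : ∀ i j, i ≠ j → Disjoint (B i) (B j))
    (hc : ∀ j, c j ∉ ⋃ i ∈ J, B i) (hd : ∀ j, d j ∉ ⋃ i ∈ J, B i)
    (hpat : ∀ j j', SamePart B (c j) (c j') ↔ SamePart B (d j) (d j'))
    (hσc : ∀ j, σ (c j) = d j) (hσJ : ∀ x ∈ ⋃ i ∈ J, B i, σ x = x) {x y : N}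
    (hx : x ∈ Set.range c ∪ ⋃ i ∈ J, B i) (hy : y ∈ Set.range c ∪ ⋃ i ∈ J, B i) :
    SamePart B (σ x) (σ y) ↔ SamePart B x y := by
  rcases hx with ⟨j, rfl⟩ | hx <;> rcases hy with ⟨j', rfl⟩ | hy
  · rw [hσc, hσc]
    exact (hpat j j').symm
  · rw [hσc, hσJ y hy]
    exact iff_of_false (fun h => hd j ((h.mem_biUnion_iff hdisj J).mpr hy))
      (fun h => hc j ((h.mem_biUnion_iff hdisj J).mpr hy))
  · rw [hσc, hσJ x hx]
    exact iff_of_false (fun h => hd j' ((h.mem_biUnion_iff hdisj J).mp hx))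
      (fun h => hc j' ((h.mem_biUnion_iff hdisj J).mp hx))
  · rw [hσJ x hx, hσJ y hy]

lemma DType_map_eq {Δ : Set (Σ n, L.Formula (Fin n))} {A : Set N}
    (hdisj : ∀ i j, i ≠ j → Disjoint (B i) (B j)) (hT : DType Δ A c = DType Δ A d)
    (hσc : ∀ j, σ (c j) = d j) (hσJ : ∀ x ∈ ⋃ i ∈ J, B i, σ x = x) {β : Type} {g : β → N}
    (hg : ∀ x, g x ∈ Set.range c ∪ ⋃ i ∈ J, B i) (hpart : ∀ x y, SamePart B (g x) (g y)) :
    DType Δ A g = DType Δ A (σ ∘ g) := by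
  by_cases hJ : ∃ x, g x ∈ ⋃ i ∈ J, B i
  · -- a part meeting `B_J` lies inside `B_J`, where `σ` is the identity
    obtain ⟨x₀, hx₀⟩ := hJ
    congr 1
    funext x
    exact (hσJ _ (((hpart x₀ x).mem_biUnion_iff hdisj J).mp hx₀)).symm
  · choose r hr using fun x => (hg x).resolve_right fun h => hJ ⟨x, h⟩
    have hgr : g = c ∘ r := funext fun x => (hr x).symm
    have hσgr : σ ∘ g = d ∘ r := funext fun x => by simp [hgr, hσc]
    rw [hσgr, hgr]
    exact DType_comp_congr Δ A r hT

lemma DType_union_subset_of_pattern {Δ : Set (Σ n, L.Formula (Fin n))} {A : Set N}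
    (hcong : IsCongruence Δ A B) (hdisj : ∀ i j, i ≠ j → Disjoint (B i) (B j))
    (hcover : A ∪ ⋃ i, B i = Set.univ)
    (hc : ∀ j, c j ∉ A ∪ ⋃ i ∈ J, B i) (hd : ∀ j, d j ∉ A ∪ ⋃ i ∈ J, B i)
    (heq : ∀ j j', c j = c j' ↔ d j = d j')
    (hpat : ∀ j j', SamePart B (c j) (c j') ↔ SamePart B (d j) (d j'))
    (hT : DType Δ A c = DType Δ A d) :
    DType Δ (A ∪ ⋃ i ∈ J, B i) c ⊆ DType Δ (A ∪ ⋃ i ∈ J, B i) d := by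
  classical
  have hcJ : ∀ j, c j ∉ ⋃ i ∈ J, B i := fun j h => hc j (Or.inr h)
  have hdJ : ∀ j, d j ∉ ⋃ i ∈ J, B i := fun j h => hd j (Or.inr h)
  -- `σ` moves the tuple `c` onto `d` and fixes the parameters from `B_J`
  let σ : N → N := fun x => if h : ∃ j, c j = x then d h.choose else x
  have hσc : ∀ j, σ (c j) = d j := fun j => by
    have h : ∃ j', c j' = c j := ⟨j, rfl⟩
    simp only [σ, dif_pos h]
    exact (heq _ _).mp h.choose_spec
  have hσJ : ∀ x ∈ ⋃ i ∈ J, B i, σ x = x := fun x hx =>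
    dif_neg (by rintro ⟨j, rfl⟩; exact hcJ j hx)
  refine DType_subset_of_forall_finset (fun j hj => hc j (Or.inl hj)) σ hσc
    (fun x hx => hσJ x (hx.1.resolve_left hx.2)) fun Y hY => ?_
  have hYc : ∀ y : Y, (y : N) ∈ Set.range c ∪ ⋃ i ∈ J, B i := fun y =>
    (hY y.2).imp id fun h => h.1.resolve_left h.2
  have hYA : ∀ y : Y, (y : N) ∉ A := fun y => by
    rcases hY y.2 with ⟨j, hj⟩ | h
    · exact hj ▸ fun h => hc j (Or.inl h)
    · exact h.2
  have hσYA : ∀ y : Y, σ y ∉ A := fun y => by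
    rcases hYc y with ⟨j, hj⟩ | h
    · rw [← hj, hσc]
      exact fun h => hd j (Or.inl h)
    · rw [hσJ _ h]
      exact hYA y
  exact hcong.DType_eq hdisj hcover Subtype.val_injective
    (fun y y' h => Subtype.ext (injOn_of_map hdJ heq hσc hσJ (hYc y) (hYc y') h)) hYA hσYA
    (fun y y' => (samePart_map_iff hdisj hcJ hdJ hpat hσc hσJ (hYc y) (hYc y')).symm)
    (fun β g hg => DType_map_eq hdisj hT hσc hσJ (fun x => hYc (g x)) hg)

end Transfer

def RealizedTypesOfLength (Δ : Set (Σ n, L.Formula (Fin n))) (A : Set N) (k : ℕ) :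
    Set (Σ k : ℕ, Set (Σ n, L.Formula (Fin n) × (Fin n → Fin k ⊕ A))) :=
  Set.range fun c : {c : Fin k → N // ∀ j, c j ∉ A} => ⟨k, DType Δ A c.1⟩

lemma realizedTypes_subset_iUnion (Δ : Set (Σ n, L.Formula (Fin n))) (A : Set N) :
    RealizedTypes Δ A ⊆ ⋃ k, RealizedTypesOfLength Δ A k := by
  rintro ⟨k, S⟩ ⟨c, hc, hS⟩
  exact Set.mem_iUnion.mpr ⟨k, ⟨c, hc⟩, by simp only at hS ⊢; rw [hS]⟩

lemma mk_realizedTypesOfLength_union_le {I : Type} {κ : Cardinal.{0}} (hκ : ℵ₀ ≤ κ)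
    {Δ : Set (Σ n, L.Formula (Fin n))} (hΔ : #Δ ≤ κ) {A : Set N} {B : I → Set N} (hA : #A ≤ κ)
    (hcong : IsCongruence Δ A B) (hdisj : ∀ i j, i ≠ j → Disjoint (B i) (B j))
    (hcover : A ∪ ⋃ i, B i = Set.univ) (J : Set I) (k : ℕ) :
    #(RealizedTypesOfLength Δ (A ∪ ⋃ i ∈ J, B i) k) ≤ 2 ^ κ := by
  let profile : {c : Fin k → N // ∀ j, c j ∉ A ∪ ⋃ i ∈ J, B i} →
      (Fin k → Fin k → Prop) × (Fin k → Fin k → Prop) ×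
        Set.range (DType Δ A : (Fin k → N) → _) := fun c =>
    (fun j j' => c.1 j = c.1 j', fun j j' => SamePart B (c.1 j) (c.1 j'), ⟨DType Δ A c.1, c.1, rfl⟩)
  refine (mk_range_le_of_factorsThrough (g := profile) fun c d h => ?_).trans ?_
  · simp only [profile, Prod.mk.injEq] at h
    obtain ⟨heq, hpat, hT⟩ := h
    have heq' : ∀ j j', c.1 j = c.1 j' ↔ d.1 j = d.1 j' := fun j j' =>
      iff_of_eq (congrFun₂ heq j j')
    have hpat' : ∀ j j', SamePart B (c.1 j) (c.1 j') ↔ SamePart B (d.1 j) (d.1 j') :=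
      fun j j' => iff_of_eq (congrFun₂ hpat j j')
    replace hT : DType Δ A c.1 = DType Δ A d.1 := congrArg Subtype.val hT
    refine congrArg (Sigma.mk k) ?_
    exact (DType_union_subset_of_pattern hcong hdisj hcover c.2 d.2 heq' hpat' hT).antisymm
      (DType_union_subset_of_pattern hcong hdisj hcover d.2 c.2 (fun j j' => (heq' j j').symm)
        (fun j j' => (hpat' j j').symm) hT.symm)
  have h2κ : ℵ₀ ≤ 2 ^ κ := hκ.trans (cantor κ).le
  have hpat : #(Fin k → Fin k → Prop) ≤ 2 ^ κ := (lt_aleph0_of_finite _).le.trans h2κ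
  calc _ ≤ #((Fin k → Fin k → Prop) × (Fin k → Fin k → Prop) ×
          Set.range (DType Δ A : (Fin k → N) → _)) := mk_set_le _
    _ ≤ 2 ^ κ := by
        simp only [mk_prod, lift_id]
        exact mul_le_of_le h2κ hpat (mul_le_of_le h2κ hpat (mk_range_DType_le hκ hΔ hA _))

theorem stmt2_general {I : Type} (κ : Cardinal.{0}) (hκ : ℵ₀ ≤ κ)
    (Δ : Set (Σ n, L.Formula (Fin n))) (hΔ : #Δ ≤ κ)
    (A : Set N) (B : I → Set N) (hA : #A ≤ κ)
    (hdisj : ∀ i j, i ≠ j → Disjoint (B i) (B j))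
    (hcover : A ∪ ⋃ i, B i = Set.univ)
    (hcong : IsCongruence Δ A B) :
    ∀ J : Set I, #(RealizedTypes Δ (A ∪ ⋃ j ∈ J, B j)) ≤ 2 ^ κ := by
  intro J
  have h2κ : ℵ₀ ≤ 2 ^ κ := hκ.trans (cantor κ).le
  calc _ ≤ _ := mk_le_mk_of_subset (realizedTypes_subset_iUnion Δ _)
    _ ≤ _ := mk_iUnion_le_sum_mk
    _ ≤ sum fun _ : ℕ => 2 ^ κ :=
        sum_le_sum _ _ (mk_realizedTypesOfLength_union_le hκ hΔ hA hcong hdisj hcover J)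
    _ = ℵ₀ * 2 ^ κ := by rw [sum_const', mk_nat]
    _ ≤ 2 ^ κ := mul_le_of_le h2κ h2κ le_rfl

/-- if `N = A ⊔ ⨆ᵢ B i` is a `(κ,Δ)`-decomposition (a `κ`-partition that is a
`Δ`-congruence over `A`), with `κ` infinite and `|Δ| ≤ κ`, then for every `J ⊆ I`, at most
`2 ^ κ` many `Δ`-types over `A ∪ B_J` are realized by finite tuples from `N - (A ∪ B_J)`. -/
theorem stmt2 {I : Type} (κ : Cardinal.{0}) (hκ : ℵ₀ ≤ κ)
    (Δ : Set (Σ n, L.Formula (Fin n))) (hΔ : #Δ ≤ κ)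
    (A : Set N) (B : I → Set N) (hA : #A ≤ κ) (hB : ∀ i, #(B i) ≤ κ)
    (hdisjA : ∀ i, Disjoint A (B i)) (hdisj : ∀ i j, i ≠ j → Disjoint (B i) (B j))
    (hcover : A ∪ ⋃ i, B i = Set.univ)
    (hcong : IsCongruence Δ A B) :
    ∀ J : Set I, #(RealizedTypes Δ (A ∪ ⋃ j ∈ J, B j)) ≤ 2 ^ κ :=
  stmt2_general κ hκ Δ hΔ A B hA hdisj hcover hcong
end

section
/- Let N be a structure consisting of an equivalence relation E with exactly two classes, each of cardinality ℵ₁. Then N admits no partition N = ⨆_{i∈I} B_i into countable parts such that: whenever a, b ∈ N lie in different parts and a', b' ∈ N lie in different parts, with a,a' having equal quantifier-free 1-types over ∅ and b,b' having equal quantifier-free 1-types over ∅, then the pairs (a,b) and (a',b') have the same quantifier-free type over ∅ (in particular E(a,b) ↔ E(a',b')). -/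
open FirstOrder Cardinal

variable {L : FirstOrder.Language.{0,0}} {N : Type} [L.Structure N]

/-- An arbitrary binary relation `E` as a structure in the language with one binary relation. -/
def relStructure {N : Type} (E : N → N → Prop) : FirstOrder.Language.graph.Structure N where
  RelMap | .adj => fun x => E (x 0) (x 1)

/-- The quantifier-free 1-type of `a` over `∅` in the structure `(N, E)`. -/
def qf1 {N : Type} (E : N → N → Prop) (a : N) :=
  @DType FirstOrder.Language.graph N (relStructure E) (QFset _) (∅ : Set N) (Fin 1) (fun _ => a)

/-- The quantifier-free type of the pair `(x, y)` over `∅` in the structure `(N, E)`. -/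
def qf2 {N : Type} (E : N → N → Prop) (x y : N) :=
  @DType FirstOrder.Language.graph N (relStructure E) (QFset _) (∅ : Set N) (Fin 2) ![x, y]


/-! With `E` reflexive, every atomic formula holds under a constant assignment, so all points of
`(N, E)` have the same quantifier-free 1-type over `∅`. Let `B` be the part containing `a`. As `B`
is countable and both classes have size `ℵ₁`, there are `y₁ ∈ [a]` and `y₂ ∈ [b]` outside `B`;
the congruence then gives `qf2 E a y₁ = qf2 E a y₂`, although `E a y₁` holds and `E a y₂` fails. -/

open FirstOrder.Language

theorem FirstOrder.Language.Term.realize_const {L : FirstOrder.Language} [L.IsRelational]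
    {M α : Type*} [L.Structure M] (t : L.Term α) (x : M) : t.realize (fun _ => x) = x := by
  cases t with
  | var => rfl
  | func f => exact isEmptyElim f

section relStructure

variable {N : Type} {E : N → N → Prop}

theorem realize_const_iff_of_isQF (hE : ∀ x, E x x) {α : Type} {l : ℕ}
    {φ : Language.graph.BoundedFormula α l} (hφ : φ.IsQF) (x y : N) :
    @BoundedFormula.Realize _ _ (relStructure E) _ _ φ (fun _ => x) (fun _ => x) ↔
      @BoundedFormula.Realize _ _ (relStructure E) _ _ φ (fun _ => y) (fun _ => y) := by
  let := relStructure E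
  have hconst (z : N) : Sum.elim (fun _ : α => z) (fun _ : Fin l => z) = fun _ => z := by
    ext (_ | _) <;> rfl
  induction hφ with
  | falsum => rfl
  | of_isAtomic h =>
    cases h with
    | equal t₁ t₂ =>
      simp only [BoundedFormula.realize_bdEqual, hconst, Term.realize_const]
    | rel R ts =>
      cases R
      show E _ _ ↔ E _ _
      simp only [hconst, Term.realize_const]
      exact iff_of_true (hE x) (hE y)
  | imp _ _ ih₁ ih₂ => exact imp_congr ih₁ ih₂

theorem qf1_eq (hE : ∀ x, E x x) (x y : N) : qf1 E x = qf1 E y := by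
  have hval (z : N) {n : ℕ} (v : Fin n → Fin 1 ⊕ (∅ : Set N)) :
      (fun i => Sum.elim (fun _ => z) (fun b => (b : N)) (v i)) = fun _ => z := by
    ext i
    rcases v i with _ | ⟨_, h⟩
    · rfl
    · exact h.elim
  ext ⟨n, φ, v⟩
  refine and_congr_right fun hφ => ?_
  simp only [Formula.Realize, hval]
  convert realize_const_iff_of_isQF hE hφ x y using 2

theorem rel_iff_of_qf2_eq {x y x' y' : N} (h : qf2 E x y = qf2 E x' y') : E x y ↔ E x' y' := by
  let := relStructure E
  have hmem (u v : N) : (⟨2, adj.formula₂ (Term.var 0) (Term.var 1), Sum.inl⟩ :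
      Σ n, Language.graph.Formula (Fin n) × (Fin n → Fin 2 ⊕ (∅ : Set N))) ∈ qf2 E u v ↔ E u v :=
    and_iff_right_of_imp fun _ => (BoundedFormula.IsAtomic.rel _ _).isQF
  rw [← hmem, ← hmem, h]

end relStructure

theorem Set.exists_mem_notMem_of_mk_eq_aleph_one {α : Type*} {s t : Set α} (hs : #s = ℵ₁)
    (ht : t.Countable) : ∃ y ∈ s, y ∉ t :=
  Set.not_subset.mp fun hst =>
    (lt_aleph_one_iff.mpr (le_aleph0_iff_set_countable.mpr (ht.mono hst))).ne hs

theorem stmt5_general (N : Type) (E : N → N → Prop) (hE : Equivalence E)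
    (a b : N) (hab : ¬ E a b)
    (hca : #{x : N | E x a} = Cardinal.aleph 1) (hcb : #{x : N | E x b} = Cardinal.aleph 1) :
    ¬ ∃ (ι : Type) (Bp : ι → Set N),
      (∀ i j : ι, i ≠ j → Disjoint (Bp i) (Bp j)) ∧ (⋃ i, Bp i) = Set.univ ∧
      (∀ i, (Bp i).Countable) ∧
      (∀ (x y x' y' : N) (i j i' j' : ι), i ≠ j → i' ≠ j' →
        x ∈ Bp i → y ∈ Bp j → x' ∈ Bp i' → y' ∈ Bp j' →
        qf1 E x = qf1 E x' → qf1 E y = qf1 E y' → qf2 E x y = qf2 E x' y') := by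
  rintro ⟨ι, Bp, -, hcov, hcount, hcong⟩
  have hpart (z : N) : ∃ i, z ∈ Bp i := Set.mem_iUnion.mp (hcov ▸ Set.mem_univ z)
  obtain ⟨i, hai⟩ := hpart a
  obtain ⟨y₁, hy₁a, hy₁i⟩ := Set.exists_mem_notMem_of_mk_eq_aleph_one hca (hcount i)
  obtain ⟨y₂, hy₂b, hy₂i⟩ := Set.exists_mem_notMem_of_mk_eq_aleph_one hcb (hcount i)
  obtain ⟨j₁, hy₁j⟩ := hpart y₁
  obtain ⟨j₂, hy₂j⟩ := hpart y₂
  have hq : qf2 E a y₁ = qf2 E a y₂ :=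
    hcong a y₁ a y₂ i j₁ i j₂ (by rintro rfl; exact hy₁i hy₁j) (by rintro rfl; exact hy₂i hy₂j)
      hai hy₁j hai hy₂j rfl (qf1_eq hE.refl y₁ y₂)
  exact hab (hE.trans ((rel_iff_of_qf2_eq hq).mp (hE.symm hy₁a)) hy₂b)

/-- if `E` is an equivalence relation on `N` with exactly two classes, each of
cardinality `ℵ₁`, then `N` admits no partition into countable parts such that the
quantifier-free type over `∅` of a cross-part pair `(a, b)` depends only on the quantifier-free
1-types over `∅` of `a` and of `b`. -/
theorem stmt5 (N : Type) (E : N → N → Prop) (hE : Equivalence E)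
    (a b : N) (hab : ¬ E a b) (hcover : ∀ x : N, E x a ∨ E x b)
    (hca : #{x : N | E x a} = Cardinal.aleph 1) (hcb : #{x : N | E x b} = Cardinal.aleph 1) :
    ¬ ∃ (ι : Type) (Bp : ι → Set N),
      (∀ i j : ι, i ≠ j → Disjoint (Bp i) (Bp j)) ∧ (⋃ i, Bp i) = Set.univ ∧
      (∀ i, (Bp i).Countable) ∧
      (∀ (x y x' y' : N) (i j i' j' : ι), i ≠ j → i' ≠ j' →
        x ∈ Bp i → y ∈ Bp j → x' ∈ Bp i' → y' ∈ Bp j' →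
        qf1 E x = qf1 E x' → qf1 E y = qf1 E y' → qf2 E x y = qf2 E x' y') :=
  stmt5_general N E hE a b hab hca hcb
end
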